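/- Let 1 ≤ a ≤ √3, c = (9/8)(a + 1/a), and K ≥ c²/9. Then 9a⁴ - 4ca³ + 4Ka² ≥ 0 and Ka² - ca + 9/4 ≥ 0, and the quantities α = (1/2)(3 - 3a² + √(9a⁴ - 4ca³ + 4Ka²)), β = (1/2)(3 - 3a² - √(9a⁴ - 4ca³ + 4Ka²)), γ = √(Ka² - ca + 9/4) satisfy β ≤ α ≤ γ. -/

import Mathlib

/-!
Write `D = 9a⁴ - 4ca³ + 4Ka²`, `E = Ka² - ca + 9/4` and `s = √D`. Completing squares,
`D = (3a² - 2ca/3)² + 4a²(K - c²/9)` and `E = (ca/3 - 3/2)² + a²(K - c²/9)`, so `K ≥ c²/9` makes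
both nonnegative and gives `3s ≥ |9a² - 2ca|`. For `α = (3 - 3a² + s)/2` one has the identity
`E - α² = (a² - 1)(3s - (9a² - 2ca))/2`, whence `α² ≤ E` as soon as `a² ≥ 1`, i.e. `α ≤ γ`.
-/

open Real

section CompletingSquares

variable {a c K : ℝ}

lemma sq_le_discriminant (hK : c ^ 2 / 9 ≤ K) :
    (3 * a ^ 2 - 2 * c * a / 3) ^ 2 ≤ 9 * a ^ 4 - 4 * c * a ^ 3 + 4 * K * a ^ 2 := by
  nlinarith [mul_nonneg (sq_nonneg a) (sub_nonneg.2 hK)]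

lemma sq_le_gamma_sq (hK : c ^ 2 / 9 ≤ K) :
    (c * a / 3 - 3 / 2) ^ 2 ≤ K * a ^ 2 - c * a + 9 / 4 := by
  nlinarith [mul_nonneg (sq_nonneg a) (sub_nonneg.2 hK)]

lemma alpha_sq_le_gamma_sq {s : ℝ} (ha : 1 ≤ a ^ 2)
    (hs : s ^ 2 = 9 * a ^ 4 - 4 * c * a ^ 3 + 4 * K * a ^ 2)
    (hs_ge : 9 * a ^ 2 - 2 * c * a ≤ 3 * s) :
    ((1 / 2) * (3 - 3 * a ^ 2 + s)) ^ 2 ≤ K * a ^ 2 - c * a + 9 / 4 := by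
  have key : K * a ^ 2 - c * a + 9 / 4 - ((1 / 2) * (3 - 3 * a ^ 2 + s)) ^ 2
      = (a ^ 2 - 1) * (3 * s - (9 * a ^ 2 - 2 * c * a)) / 2 := by
    linear_combination (-1 / 4 : ℝ) * hs
  have : 0 ≤ (a ^ 2 - 1) * (3 * s - (9 * a ^ 2 - 2 * c * a)) :=
    mul_nonneg (by linarith) (by linarith)
  linarith

end CompletingSquares

theorem stmt_10 (a : ℝ) (ha1 : 1 ≤ a)
    (c : ℝ) (K : ℝ) (hK : c ^ 2 / 9 ≤ K) :
    0 ≤ 9 * a ^ 4 - 4 * c * a ^ 3 + 4 * K * a ^ 2 ∧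
    0 ≤ K * a ^ 2 - c * a + 9 / 4 ∧
    (1 / 2) * (3 - 3 * a ^ 2 - Real.sqrt (9 * a ^ 4 - 4 * c * a ^ 3 + 4 * K * a ^ 2))
      ≤ (1 / 2) * (3 - 3 * a ^ 2 + Real.sqrt (9 * a ^ 4 - 4 * c * a ^ 3 + 4 * K * a ^ 2)) ∧
    (1 / 2) * (3 - 3 * a ^ 2 + Real.sqrt (9 * a ^ 4 - 4 * c * a ^ 3 + 4 * K * a ^ 2))
      ≤ Real.sqrt (K * a ^ 2 - c * a + 9 / 4) := by
  have hD := sq_le_discriminant (a := a) hK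
  have hD_nonneg := (sq_nonneg _).trans hD
  have hE_nonneg := (sq_nonneg _).trans (sq_le_gamma_sq (a := a) hK)
  refine ⟨hD_nonneg, hE_nonneg,
    by linarith [sqrt_nonneg (9 * a ^ 4 - 4 * c * a ^ 3 + 4 * K * a ^ 2)], ?_⟩
  have hs_ge : 9 * a ^ 2 - 2 * c * a ≤ 3 * √(9 * a ^ 4 - 4 * c * a ^ 3 + 4 * K * a ^ 2) := by
    linarith [le_abs_self (3 * a ^ 2 - 2 * c * a / 3), abs_le_sqrt hD]
  have hα := alpha_sq_le_gamma_sq (one_le_pow₀ ha1) (sq_sqrt hD_nonneg) hs_ge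
  exact (le_abs_self _).trans (abs_le_sqrt hα)
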